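/- Let ω be a radial weight in the class D̂. Then there exists K=K(ω)>1 such that the sequence {M_n}_{n≥0} defined by M_n = ⌊1/(1−r_n)⌋, where r_n = inf{r∈[0,1): ω̂(r) = ω̂(0)·K^{−n}}, is a lacunary sequence of natural numbers (in fact M_{n+1} ≥ (3/2)·M_n for all n≥0). -/

import Mathlib

open MeasureTheory Filter Set
open scoped ENNReal

noncomputable section

/-- `ω̂(r) = ∫_r^1 ω(s) ds`. -/
def omegaHat (ω : ℝ → ℝ) (r : ℝ) : ℝ := ∫ s in r..1, ω s

/-- A radial weight: nonnegative and Lebesgue integrable on `[0,1)`. -/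
def IsRadialWeight (ω : ℝ → ℝ) : Prop :=
  (∀ r ∈ Set.Ico (0:ℝ) 1, 0 ≤ ω r) ∧ MeasureTheory.IntegrableOn ω (Set.Ico 0 1)

/-- The class `D̂` of upper doubling radial weights. -/
def InDhat (ω : ℝ → ℝ) : Prop :=
  ∃ C > (0:ℝ), ∀ r ∈ Set.Ico (0:ℝ) 1, omegaHat ω r ≤ C * omegaHat ω ((1 + r) / 2)

/-- The class `Ď`. -/
def InDcheck (ω : ℝ → ℝ) : Prop :=
  ∃ K > (1:ℝ), ∃ C > (1:ℝ), ∀ r ∈ Set.Ico (0:ℝ) 1,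
    C * omegaHat ω (1 - (1 - r) / K) ≤ omegaHat ω r

/-- Moments `μ_x = ∫_0^1 r^x μ(r) dr`. -/
def momentW (μ : ℝ → ℝ) (x : ℝ) : ℝ := ∫ r in (0:ℝ)..1, r ^ x * μ r

/-- The coefficients `μ_{2k+1}` of the `A²_μ` pairing. -/
def momentCoeff (μ : ℝ → ℝ) : ℕ → ℝ := fun k => momentW μ (2 * (k:ℝ) + 1)

/-- The point `r e^{iθ}` of the circle of radius `r`. -/
def circlePt (r θ : ℝ) : ℂ := (r:ℂ) * Complex.exp ((θ:ℂ) * Complex.I)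

/-- Integral means `M_p(r,f)` (with values in `[0,∞]`). -/
def MpE (p r : ℝ) (f : ℂ → ℂ) : ℝ≥0∞ :=
  (ENNReal.ofReal (1 / (2 * Real.pi)) *
    ∫⁻ θ in Set.Ioo (0:ℝ) (2 * Real.pi), ENNReal.ofReal (‖f (circlePt r θ)‖ ^ p)) ^ (1 / p)

/-- Integral means of a `[0,∞]`-valued function. -/
def MpEE (p r : ℝ) (F : ℂ → ℝ≥0∞) : ℝ≥0∞ :=
  (ENNReal.ofReal (1 / (2 * Real.pi)) *
    ∫⁻ θ in Set.Ioo (0:ℝ) (2 * Real.pi), (F (circlePt r θ)) ^ p) ^ (1 / p)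

/-- The norm of the mixed norm space `L^{p,q}_ω`. -/
def LpqNormE (ω : ℝ → ℝ) (p q : ℝ) (f : ℂ → ℂ) : ℝ≥0∞ :=
  (∫⁻ r in Set.Ioo (0:ℝ) 1, (MpE p r f) ^ q * ENNReal.ofReal (r * ω r)) ^ (1 / q)

/-- The `L^{p,q}_ω` norm of a `[0,∞]`-valued function. -/
def LpqNormEE (ω : ℝ → ℝ) (p q : ℝ) (F : ℂ → ℝ≥0∞) : ℝ≥0∞ :=
  (∫⁻ r in Set.Ioo (0:ℝ) 1, (MpEE p r F) ^ q * ENNReal.ofReal (r * ω r)) ^ (1 / q)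

/-- The norm of `A^{p,∞}_ω` : `sup_{0 ≤ r < 1} M_p(r,f) ω̂(r)`. -/
def ApInfNormE (ω : ℝ → ℝ) (p : ℝ) (f : ℂ → ℂ) : ℝ≥0∞ :=
  ⨆ r ∈ Set.Ico (0:ℝ) 1, MpE p r f * ENNReal.ofReal (omegaHat ω r)

/-- Membership in the mixed norm space `A^{p,q}_ω`. -/
def InApq (ω : ℝ → ℝ) (p q : ℝ) (f : ℂ → ℂ) : Prop :=
  DifferentiableOn ℂ f (Metric.ball 0 1) ∧ LpqNormE ω p q f < ⊤

/-- Membership in `A^{p,∞}_ω`. -/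
def InApInf (ω : ℝ → ℝ) (p : ℝ) (f : ℂ → ℂ) : Prop :=
  DifferentiableOn ℂ f (Metric.ball 0 1) ∧ ApInfNormE ω p f < ⊤

/-- Taylor coefficient of `f` at `0`. -/
def taylorCoeff (f : ℂ → ℂ) (n : ℕ) : ℂ := iteratedDeriv n f 0 / (n.factorial : ℂ)

/-- The pairing `⟨f,g⟩ = lim_{r→1⁻} ∑_k f̂(k) conj(ĝ(k)) c(k) r^k` exists and equals `l`. -/
def HasPairingC (c : ℕ → ℝ) (f g : ℂ → ℂ) (l : ℂ) : Prop :=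
  (∀ r ∈ Set.Ico (0:ℝ) 1, Summable (fun k : ℕ =>
    taylorCoeff f k * (starRingEnd ℂ) (taylorCoeff g k) * ((c k : ℝ) : ℂ) * ((r:ℂ)) ^ k)) ∧
  Filter.Tendsto (fun r : ℝ => ∑' k : ℕ,
    taylorCoeff f k * (starRingEnd ℂ) (taylorCoeff g k) * ((c k : ℝ) : ℂ) * ((r:ℂ)) ^ k)
    (nhdsWithin 1 (Set.Iio 1)) (nhds l)

/-- `L` is linear on the functions satisfying `P`. -/
def IsLinearOn (P : (ℂ → ℂ) → Prop) (L : (ℂ → ℂ) → ℂ) : Prop :=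
  (∀ f g : ℂ → ℂ, P f → P g → L (f + g) = L f + L g) ∧
  (∀ (c : ℂ) (f : ℂ → ℂ), P f → L (c • f) = c * L f)

/-- Dilation `f_r(z) = f(rz)`. -/
def dilateF (f : ℂ → ℂ) (r : ℝ) : ℂ → ℂ := fun z => f ((r:ℂ) * z)

/-- The BMOA norm `|f(0)| + sup_{a∈D} sup_{0<r<1} M₂(r, f∘φ_a - f(a))`. -/
def BMOANormE (f : ℂ → ℂ) : ℝ≥0∞ :=
  ENNReal.ofReal ‖f 0‖ +
    ⨆ a ∈ Metric.ball (0:ℂ) 1, ⨆ r ∈ Set.Ioo (0:ℝ) 1,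
      MpE 2 r (fun z => f ((a - z) / (1 - (starRingEnd ℂ) a * z)) - f a)

/-- The Bloch norm `|f(0)| + sup_{z∈D} (1-|z|²)|f'(z)|`. -/
def BlochNormE (f : ℂ → ℂ) : ℝ≥0∞ :=
  ENNReal.ofReal ‖f 0‖ +
    ⨆ z ∈ Metric.ball (0:ℂ) 1, ENNReal.ofReal ((1 - ‖z‖ ^ 2) * ‖deriv f z‖)

/-- The norm of `X(q,ω)`: `(∫_0^1 ‖f_r‖_X^q ω(r) dr)^{1/q}`. -/
def XqNormE (Xnorm : (ℂ → ℂ) → ℝ≥0∞) (ω : ℝ → ℝ) (q : ℝ) (f : ℂ → ℂ) : ℝ≥0∞ :=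
  (∫⁻ r in Set.Ioo (0:ℝ) 1, (Xnorm (dilateF f r)) ^ q * ENNReal.ofReal (ω r)) ^ (1 / q)

/-- The norm of `X(∞,ω)`: `sup_{0<r<1} ‖f_r‖_X ω̂(r)`. -/
def XInfNormE (Xnorm : (ℂ → ℂ) → ℝ≥0∞) (ω : ℝ → ℝ) (f : ℂ → ℂ) : ℝ≥0∞ :=
  ⨆ r ∈ Set.Ioo (0:ℝ) 1, Xnorm (dilateF f r) * ENNReal.ofReal (omegaHat ω r)

/-- The standard radial weight `ν_β(r) = (β+1)(1-r²)^β`. -/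
def nuWeight (β : ℝ) : ℝ → ℝ := fun r => (β + 1) * (1 - r ^ 2) ^ β

/-- The Bergman reproducing kernel `B^ω_a(z) = ∑ (z conj a)^n / (2 ω_{2n+1})`. -/
def bergmanKernel (ω : ℝ → ℝ) (a z : ℂ) : ℂ :=
  ∑' n : ℕ, (z * (starRingEnd ℂ) a) ^ n / (2 * ((momentW ω (2 * (n:ℝ) + 1) : ℝ) : ℂ))

/-- The Bergman projection (`dA` is normalized area measure). -/
def PomegaProj (ω : ℝ → ℝ) (f : ℂ → ℂ) (z : ℂ) : ℂ :=
  (Real.pi)⁻¹ • ∫ ζ in Metric.ball (0:ℂ) 1,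
    f ζ * (starRingEnd ℂ) (bergmanKernel ω z ζ) * ((ω ‖ζ‖ : ℝ) : ℂ)

/-- The maximal Bergman projection applied to `|f|`, with values in `[0,∞]`. -/
def PomegaPlusL (ω : ℝ → ℝ) (f : ℂ → ℂ) (z : ℂ) : ℝ≥0∞ :=
  ∫⁻ ζ in Metric.ball (0:ℂ) 1,
    ENNReal.ofReal (‖f ζ‖ * ‖bergmanKernel ω z ζ‖ * ω ‖ζ‖ / Real.pi)

/-- The Hardy `H¹` norm. -/
def H1NormE (f : ℂ → ℂ) : ℝ≥0∞ := ⨆ r ∈ Set.Ioo (0:ℝ) 1, MpE 1 r f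

/-- `r_n = inf{ r ∈ [0,1) : ω̂(r) = ω̂(0) K^{-n} }`. -/
def rSeq (ω : ℝ → ℝ) (K : ℝ) (n : ℕ) : ℝ :=
  sInf {r | r ∈ Set.Ico (0:ℝ) 1 ∧ omegaHat ω r = omegaHat ω 0 * K ^ (-(n:ℝ))}

/-- `M_n = ⌊1/(1-r_n)⌋`. -/
def MSeq (ω : ℝ → ℝ) (K : ℝ) (n : ℕ) : ℕ := ⌊1 / (1 - rSeq ω K n)⌋₊

/-- Weighted Hadamard product of a polynomial with an analytic function:
`z ↦ ∑_j c(j) P̂(j) ĝ(j) z^j`. -/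
def hadamardPolyC (c : ℕ → ℂ) (P : Polynomial ℂ) (g : ℂ → ℂ) : ℂ → ℂ :=
  fun z => ∑ j ∈ Finset.range (P.natDegree + 1), c j * P.coeff j * taylorCoeff g j * z ^ j

/-- An admissible Banach space of analytic functions on the unit disc, given by a
carrier set and a norm function. -/
structure AdmissibleSpace where
  carrier : Set (ℂ → ℂ)
  nrm : (ℂ → ℂ) → ℝ
  mem_analytic : ∀ f ∈ carrier, DifferentiableOn ℂ f (Metric.ball 0 1)
  zero_mem : (0 : ℂ → ℂ) ∈ carrier
  add_mem : ∀ f g : ℂ → ℂ, f ∈ carrier → g ∈ carrier → f + g ∈ carrier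
  smul_mem : ∀ (c : ℂ) (f : ℂ → ℂ), f ∈ carrier → c • f ∈ carrier
  nrm_nonneg : ∀ f ∈ carrier, 0 ≤ nrm f
  nrm_eq_zero : ∀ f ∈ carrier, nrm f = 0 → ∀ z ∈ Metric.ball (0:ℂ) 1, f z = 0
  nrm_add : ∀ f g : ℂ → ℂ, f ∈ carrier → g ∈ carrier → nrm (f + g) ≤ nrm f + nrm g
  nrm_smul : ∀ (c : ℂ) (f : ℂ → ℂ), f ∈ carrier → nrm (c • f) = ‖c‖ * nrm f
  complete : ∀ u : ℕ → (ℂ → ℂ), (∀ n, u n ∈ carrier) →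
    (∀ ε : ℝ, 0 < ε → ∃ N : ℕ, ∀ m ≥ N, ∀ n ≥ N, nrm (u m - u n) < ε) →
    ∃ f ∈ carrier, Filter.Tendsto (fun n => nrm (u n - f)) Filter.atTop (nhds 0)
  norm_conv_implies_ucc : ∀ (u : ℕ → (ℂ → ℂ)) (f : ℂ → ℂ),
    (∀ n, u n ∈ carrier) → f ∈ carrier →
    Filter.Tendsto (fun n => nrm (u n - f)) Filter.atTop (nhds 0) →
    ∀ Kc : Set ℂ, Kc ⊆ Metric.ball 0 1 → IsCompact Kc →
      TendstoUniformlyOn (fun n => u n) f Filter.atTop Kc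
  ucc_implies_norm_conv : ∀ R : ℝ, 1 < R → ∀ (u : ℕ → (ℂ → ℂ)) (f : ℂ → ℂ),
    (∀ n, u n ∈ carrier ∧ DifferentiableOn ℂ (u n) (Metric.ball 0 R)) →
    DifferentiableOn ℂ f (Metric.ball 0 R) →
    (∀ Kc : Set ℂ, Kc ⊆ Metric.ball (0:ℂ) R → IsCompact Kc →
      TendstoUniformlyOn (fun n => u n) f Filter.atTop Kc) →
    f ∈ carrier ∧ Filter.Tendsto (fun n => nrm (u n - f)) Filter.atTop (nhds 0)
  dilation_bound : ∃ C > (0:ℝ), ∀ f ∈ carrier, ∀ ζ : ℂ, ‖ζ‖ ≤ 1 →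
    (fun z => f (ζ * z)) ∈ carrier ∧ nrm (fun z => f (ζ * z)) ≤ C * nrm f

/-- The operator `T_p = I^{ν_{1/p-2}}`. -/
def TpOp (p : ℝ) (g : ℂ → ℂ) : ℂ → ℂ :=
  fun z => ∑' k : ℕ,
    taylorCoeff g k * ((momentW (nuWeight (1 / p - 2)) (2 * (k:ℝ) + 1) : ℝ) : ℂ) * z ^ k

/-- Membership in the Bloch space. -/
def InBloch (g : ℂ → ℂ) : Prop :=
  DifferentiableOn ℂ g (Metric.ball 0 1) ∧ BlochNormE g < ⊤

open Classical in
/-- The norm of the space `X_p = T_p(B)`, normed so that `T_p` is an isometry. -/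
def XpNormE (p : ℝ) (h : ℂ → ℂ) : ℝ≥0∞ :=
  if H : ∃ g : ℂ → ℂ, InBloch g ∧ Set.EqOn h (TpOp p g) (Metric.ball 0 1)
  then BlochNormE H.choose else ⊤

/-- The polynomial `V_n ∗ g` where `V_n(z) = ∑_{j=2^{n-1}}^{2^{n+1}-1} ψ(j/2^{n-1}) z^j`
and `ψ(t) = Ψ(t/2) - Ψ(t)`. -/
def VnStar (Ψ : ℝ → ℝ) (n : ℕ) (g : ℂ → ℂ) : ℂ → ℂ :=
  fun z => ∑ j ∈ Finset.Icc (2 ^ (n - 1) : ℕ) (2 ^ (n + 1) - 1 : ℕ),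
    (((Ψ ((j:ℝ) / 2 ^ n) - Ψ ((j:ℝ) / 2 ^ (n - 1))) : ℝ) : ℂ) * taylorCoeff g j * z ^ j

/-- `D^ω(V_n ∗ g)`, where `D^ω h(z) = ∑ ĥ(k) z^k/(2ω_{2k+1})`. -/
def DVnStar (Ψ : ℝ → ℝ) (ω : ℝ → ℝ) (n : ℕ) (g : ℂ → ℂ) : ℂ → ℂ :=
  fun z => ∑ j ∈ Finset.Icc (2 ^ (n - 1) : ℕ) (2 ^ (n + 1) - 1 : ℕ),
    (((Ψ ((j:ℝ) / 2 ^ n) - Ψ ((j:ℝ) / 2 ^ (n - 1))) : ℝ) : ℂ) * taylorCoeff g j * z ^ j /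
      (2 * ((momentW ω (2 * (j:ℝ) + 1) : ℝ) : ℂ))

/-- `J_ω(t) = ∫_0^t ds/(ω̂(s)(1-s))`. -/
def Jomega (ω : ℝ → ℝ) (t : ℝ) : ℝ := ∫ s in (0:ℝ)..t, 1 / (omegaHat ω s * (1 - s))

/-! The doubling condition halves `1 - r` twice at the cost of a factor `C²` in `ω̂`; with
`K = 2C²` the level `ω̂(r_{n+1}) = ω̂(r_n)/K` lies strictly below `ω̂(1 - (1 - r_n)/4)`, so
`1 - r_{n+1} < (1 - r_n)/4`, and taking floors of the reciprocals loses at most a factor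
`3/2` of the resulting factor `4`. -/

theorem ContinuousOn.csInf_levelSet_mem {f : ℝ → ℝ} {a b v : ℝ} (hab : a ≤ b)
    (hf : ContinuousOn f (Icc a b)) (hv : v ∈ Ioc (f b) (f a)) :
    sInf {r | r ∈ Ico a b ∧ f r = v} ∈ {r | r ∈ Ico a b ∧ f r = v} := by
  have hS : {r | r ∈ Ico a b ∧ f r = v} = Icc a b ∩ f ⁻¹' {v} := by
    ext r
    simp only [mem_ofPred_eq, mem_inter_iff, mem_preimage, mem_singleton_iff, mem_Ico, mem_Icc]
    refine ⟨fun ⟨⟨har, hrb⟩, hfr⟩ => ⟨⟨har, hrb.le⟩, hfr⟩, fun ⟨⟨har, hrb⟩, hfr⟩ => ?_⟩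
    refine ⟨⟨har, hrb.lt_of_ne ?_⟩, hfr⟩
    rintro rfl
    exact hv.1.ne hfr
  obtain ⟨r, hr, hfr⟩ := intermediate_value_Icc' hab hf (Ioc_subset_Icc_self hv)
  rw [hS]
  exact (hf.preimage_isClosed_of_isClosed isClosed_Icc isClosed_singleton).csInf_mem
    ⟨r, hr, hfr⟩ ⟨a, fun r hr => hr.1.1⟩

theorem three_halves_mul_floor_le_floor {a b : ℝ} (ha : 1 ≤ a) (hab : 4 * a < b) :
    (3 / 2 : ℝ) * ⌊a⌋₊ ≤ ⌊b⌋₊ :=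
  calc (3 / 2 : ℝ) * ⌊a⌋₊ ≤ 3 / 2 * a := by gcongr; exact Nat.floor_le (by linarith)
    _ ≤ b - 1 := by linarith
    _ ≤ ⌊b⌋₊ := (Nat.sub_one_lt_floor b).le

section RadialWeight

variable {ω : ℝ → ℝ}

@[simp]
theorem omegaHat_one : omegaHat ω 1 = 0 := intervalIntegral.integral_same

namespace IsRadialWeight

variable (hω : IsRadialWeight ω)
include hω

theorem integrableOn_Icc : IntegrableOn ω (Icc 0 1) :=
  (integrableOn_Icc_iff_integrableOn_Ico).mpr hω.2

theorem continuousOn_omegaHat : ContinuousOn (omegaHat ω) (Icc 0 1) := by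
  have h := intervalIntegral.continuousOn_primitive_interval_left (f := ω) (μ := volume)
    (a := 0) (b := 1)
  rw [uIcc_of_le zero_le_one] at h
  exact h hω.integrableOn_Icc

theorem antitoneOn_omegaHat : AntitoneOn (omegaHat ω) (Icc 0 1) := by
  intro x hx y hy hxy
  have hint : ∀ {u v : ℝ}, 0 ≤ u → u ≤ v → v ≤ 1 → IntervalIntegrable ω volume u v :=
    fun hu huv hv => (intervalIntegrable_iff_integrableOn_Icc_of_le huv).mpr
      (hω.integrableOn_Icc.mono_set (Icc_subset_Icc hu hv))
  have hsplit : (∫ s in x..y, ω s) + omegaHat ω y = omegaHat ω x :=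
    intervalIntegral.integral_add_adjacent_intervals (hint hx.1 hxy hy.2) (hint hy.1 hy.2 le_rfl)
  have hnonneg : 0 ≤ ∫ s in x..y, ω s := by
    refine intervalIntegral.integral_nonneg_of_ae_restrict hxy ?_
    rw [EventuallyLE, ae_restrict_iff' measurableSet_Icc]
    filter_upwards [(countable_singleton (1 : ℝ)).ae_notMem volume] with s hs1 hs
    exact hω.1 s ⟨hx.1.trans hs.1, (hs.2.trans hy.2).lt_of_ne hs1⟩
  linarith

end IsRadialWeight

theorem InDhat.exists_one_le (hD : InDhat ω) (hpos : ∀ r ∈ Ico (0 : ℝ) 1, 0 < omegaHat ω r) :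
    ∃ C, 1 ≤ C ∧ ∀ r ∈ Ico (0 : ℝ) 1, omegaHat ω r ≤ C * omegaHat ω ((1 + r) / 2) := by
  obtain ⟨C, -, hC⟩ := hD
  refine ⟨max C 1, le_max_right _ _, fun r hr => (hC r hr).trans ?_⟩
  have hmid : (1 + r) / 2 ∈ Ico (0 : ℝ) 1 := ⟨by linarith [hr.1], by linarith [hr.2]⟩
  gcongr
  exacts [(hpos _ hmid).le, le_max_left _ _]

theorem omegaHat_le_sq_mul_quarter {C : ℝ} (hC : 0 ≤ C)
    (hdbl : ∀ r ∈ Ico (0 : ℝ) 1, omegaHat ω r ≤ C * omegaHat ω ((1 + r) / 2))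
    {r : ℝ} (hr : r ∈ Ico (0 : ℝ) 1) :
    omegaHat ω r ≤ C ^ 2 * omegaHat ω (1 - (1 - r) / 4) := by
  have hmid : (1 + r) / 2 ∈ Ico (0 : ℝ) 1 := ⟨by linarith [hr.1], by linarith [hr.2]⟩
  calc omegaHat ω r ≤ C * omegaHat ω ((1 + r) / 2) := hdbl r hr
    _ ≤ C * (C * omegaHat ω ((1 + (1 + r) / 2) / 2)) := by gcongr; exact hdbl _ hmid
    _ = C ^ 2 * omegaHat ω (1 - (1 - r) / 4) := by ring_nf

variable (hω : IsRadialWeight ω) (hpos : ∀ r ∈ Ico (0 : ℝ) 1, 0 < omegaHat ω r)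
  {K : ℝ} (hK : 1 ≤ K)
include hω hpos hK

theorem rSeq_mem (n : ℕ) :
    rSeq ω K n ∈ Ico (0 : ℝ) 1 ∧ omegaHat ω (rSeq ω K n) = omegaHat ω 0 * K ^ (-(n : ℝ)) := by
  have h0 := hpos 0 ⟨le_rfl, zero_lt_one⟩
  refine hω.continuousOn_omegaHat.csInf_levelSet_mem zero_le_one ⟨?_, ?_⟩
  · rw [omegaHat_one]
    exact mul_pos h0 (Real.rpow_pos_of_pos (by linarith) _)
  · exact mul_le_of_le_one_right h0.le
      (Real.rpow_le_one_of_one_le_of_nonpos hK (neg_nonpos.mpr n.cast_nonneg))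

theorem omegaHat_rSeq_succ (n : ℕ) :
    omegaHat ω (rSeq ω K (n + 1)) = omegaHat ω (rSeq ω K n) / K := by
  rw [(rSeq_mem hω hpos hK n).2, (rSeq_mem hω hpos hK (n + 1)).2, Nat.cast_succ, neg_add,
    Real.rpow_add (by linarith), Real.rpow_neg_one]
  ring

theorem one_le_one_div_one_sub_rSeq (n : ℕ) : 1 ≤ 1 / (1 - rSeq ω K n) := by
  obtain ⟨⟨h0, h1⟩, -⟩ := rSeq_mem hω hpos hK n
  rw [le_div_iff₀ (by linarith)]
  linarith

theorem one_le_MSeq (n : ℕ) : 1 ≤ MSeq ω K n :=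
  Nat.le_floor (by exact_mod_cast one_le_one_div_one_sub_rSeq hω hpos hK n)

variable {C : ℝ} (hC : 0 ≤ C)
  (hdbl : ∀ r ∈ Ico (0 : ℝ) 1, omegaHat ω r ≤ C * omegaHat ω ((1 + r) / 2)) (hCK : 2 * C ^ 2 ≤ K)
include hC hdbl hCK

theorem one_sub_rSeq_succ_lt (n : ℕ) : 1 - rSeq ω K (n + 1) < (1 - rSeq ω K n) / 4 := by
  obtain ⟨hr, -⟩ := rSeq_mem hω hpos hK n
  obtain ⟨hr', -⟩ := rSeq_mem hω hpos hK (n + 1)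
  set r := rSeq ω K n
  set s := 1 - (1 - r) / 4 with hs_def
  have hs : s ∈ Ico (0 : ℝ) 1 := ⟨by linarith [hr.1], by linarith [hr.2]⟩
  have hωs := hpos s hs
  have hlevel : omegaHat ω (rSeq ω K (n + 1)) < omegaHat ω s := by
    rw [omegaHat_rSeq_succ hω hpos hK, div_lt_iff₀ (by linarith)]
    have := omegaHat_le_sq_mul_quarter hC hdbl hr
    nlinarith
  by_contra! hle
  have := hω.antitoneOn_omegaHat ⟨hr'.1, hr'.2.le⟩ ⟨hs.1, hs.2.le⟩ (by linarith)
  linarith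

theorem three_halves_mul_MSeq_le_succ (n : ℕ) :
    (3 / 2 : ℝ) * MSeq ω K n ≤ MSeq ω K (n + 1) := by
  refine three_halves_mul_floor_le_floor (one_le_one_div_one_sub_rSeq hω hpos hK n) ?_
  have hpos' : 0 < 1 - rSeq ω K (n + 1) := by linarith [(rSeq_mem hω hpos hK (n + 1)).1.2]
  calc 4 * (1 / (1 - rSeq ω K n)) = 1 / ((1 - rSeq ω K n) / 4) := by field_simp
    _ < 1 / (1 - rSeq ω K (n + 1)) :=
      one_div_lt_one_div_of_lt hpos' (one_sub_rSeq_succ_lt hω hpos hK hC hdbl hCK n)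

end RadialWeight

/-- For `ω ∈ D̂` there is `K>1` such that `M_n = ⌊1/(1-r_n)⌋`, with
`r_n = inf{r ∈ [0,1) : ω̂(r) = ω̂(0)K^{-n}}`, is lacunary; in fact `M_{n+1} ≥ (3/2)M_n`. -/
theorem MSeq_lacunary
    (ω : ℝ → ℝ) (hω : IsRadialWeight ω)
    (hpos : ∀ r ∈ Set.Ico (0:ℝ) 1, 0 < omegaHat ω r)
    (hD : InDhat ω) :
    ∃ K : ℝ, 1 < K ∧ (∀ n : ℕ, MSeq ω K n < MSeq ω K (n + 1)) ∧
      ∀ n : ℕ, (3 / 2 : ℝ) * (MSeq ω K n : ℝ) ≤ (MSeq ω K (n + 1) : ℝ) := by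
  obtain ⟨C, hC, hdbl⟩ := hD.exists_one_le hpos
  have hK : 1 < 2 * C ^ 2 := by nlinarith
  have hgrowth := three_halves_mul_MSeq_le_succ hω hpos hK.le (by linarith) hdbl le_rfl
  refine ⟨2 * C ^ 2, hK, fun n => ?_, hgrowth⟩
  have hM : (1 : ℝ) ≤ MSeq ω (2 * C ^ 2) n := by exact_mod_cast one_le_MSeq hω hpos hK.le n
  exact_mod_cast (by linarith [hgrowth n] : (MSeq ω (2 * C ^ 2) n : ℝ) < MSeq ω _ (n + 1))
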